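/- arXiv:2312.03622 — 2 statements merged into one kernel-verified Lean document; each statement's English description precedes it below -/
import Mathlib

section
/- Let A ⊆ B be an inclusion of unital C*-algebras with A a closed *-subalgebra of B containing the unit 1_B. Suppose that for every self-adjoint a ∈ A and every ε > 0 there exists an invertible self-adjoint b ∈ B with ‖a − b‖ ≤ ε. Then for all positive x, y ∈ A with x·y = 0 and every ε > 0 there exists a projection p ∈ B such that ‖p·x − x‖ ≤ ε and ‖(1−p)·y − y‖ ≤ ε. -/
/-- A projection in a C*-algebra: a self-adjoint idempotent. -/
def IsProjection {B : Type*} [Mul B] [Star B] (p : B) : Prop := star p = p ∧ p * p = p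

/-!
Put `a = x - y`, so that `x = a⁺` and `y = a⁻`. For an invertible self-adjoint `b` close to `a`,
the indicator of `(0, ∞)` is continuous on the spectrum of `b`, so `p = χ_{(0,∞)}(b)` is a
projection with `p b = b⁺` and `(1 - p) b = -b⁻`. Then
`(1 - p) x² = (1 - p) a x = -(b⁻ - a⁻) x + (1 - p) (a - b) x`, and the C*-identity gives
`‖(1 - p) x‖² ≤ ‖(1 - p) x²‖ ≤ (‖b⁻ - a⁻‖ + ‖a - b‖) ‖x‖`, which is small because `b ↦ b⁻` is
continuous on self-adjoint elements. The bound for `p y` is the same argument for `-a` and `-b`.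
-/

open Filter Topology

lemma continuousOn_ite_pos_one_zero :
    ContinuousOn (fun t : ℝ => if 0 < t then (1 : ℝ) else 0) {0}ᶜ := by
  refine continuousOn_of_forall_continuousAt fun t (ht : t ≠ 0) => ?_
  rcases ht.lt_or_gt with ht | ht
  · exact continuousAt_const.congr <|
      (eventually_lt_nhds ht).mono fun s hs => (if_neg hs.not_gt).symm
  · exact continuousAt_const.congr <| (eventually_gt_nhds ht).mono fun s hs => (if_pos hs).symm

lemma IsStarProjection.norm_mul_sq_le {E : Type*} [NormedRing E] [StarRing E] [CStarRing E]
    {q x : E} (hq : IsStarProjection q) (hx : IsSelfAdjoint x) :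
    ‖q * x‖ ^ 2 ≤ ‖q * (x * x)‖ :=
  calc ‖q * x‖ ^ 2 = ‖q * (x * x) * q‖ := by
        rw [sq, ← CStarRing.norm_self_mul_star, star_mul, hx.star_eq, hq.isSelfAdjoint.star_eq]
        noncomm_ring
    _ ≤ ‖q * (x * x)‖ * ‖q‖ := norm_mul_le _ _
    _ ≤ ‖q * (x * x)‖ := mul_le_of_le_one_right (norm_nonneg _) (hq.norm_le q)

section

variable {B : Type*} [CStarAlgebra B]

lemma continuousOn_negPart : ContinuousOn (fun b : B => b⁻) {b | IsSelfAdjoint b} :=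
  ContinuousOn.cfcₙ_of_mem_nhdsSet (𝕜 := ℝ) (s := Set.univ) (·⁻) univ_mem continuousOn_id
    fun _ hb => hb

lemma continuousOn_posPart : ContinuousOn (fun b : B => b⁺) {b | IsSelfAdjoint b} :=
  ContinuousOn.cfcₙ_of_mem_nhdsSet (𝕜 := ℝ) (s := Set.univ) (·⁺) univ_mem continuousOn_id
    fun _ hb => hb

lemma IsStarProjection.norm_mul_posPart_sq_le {q a b : B} (hq : IsStarProjection q)
    (ha : IsSelfAdjoint a) (hqb : q * b = -b⁻) :
    ‖q * a⁺‖ ^ 2 ≤ (‖b⁻ - a⁻‖ + ‖a - b‖) * ‖a⁺‖ := by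
  have hexp : q * (a⁺ * a⁺) = -((b⁻ - a⁻) * a⁺) + q * (a - b) * a⁺ :=
    calc q * (a⁺ * a⁺) = q * ((a⁺ - a⁻) * a⁺) := by
          rw [sub_mul, CFC.negPart_mul_posPart, sub_zero]
      _ = q * (b + (a - b)) * a⁺ := by rw [CFC.posPart_sub_negPart a, add_sub_cancel, mul_assoc]
      _ = _ := by rw [mul_add, add_mul, hqb, neg_mul, sub_mul, CFC.negPart_mul_posPart, sub_zero]
  calc ‖q * a⁺‖ ^ 2 ≤ ‖q * (a⁺ * a⁺)‖ := hq.norm_mul_sq_le (cfcₙ_predicate _ a)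
    _ ≤ ‖b⁻ - a⁻‖ * ‖a⁺‖ + ‖q‖ * ‖a - b‖ * ‖a⁺‖ := by
        rw [hexp]
        refine (norm_add_le _ _).trans (add_le_add ?_ ?_)
        · rw [norm_neg]; exact norm_mul_le _ _
        · exact (norm_mul_le _ _).trans (by gcongr; exact norm_mul_le _ _)
    _ ≤ (‖b⁻ - a⁻‖ + ‖a - b‖) * ‖a⁺‖ := by
        have := mul_le_of_le_one_left (norm_nonneg (a - b)) (hq.norm_le q)
        nlinarith [norm_nonneg a⁺]

/-- `χ_{(0,∞)}(b)`. Since `cfc` returns `0` on functions that are discontinuous on the spectrum,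
this is only meaningful when `0 ∉ σ(b)`. -/
noncomputable def posProjection (b : B) : B := cfc (fun t : ℝ => if 0 < t then (1 : ℝ) else 0) b

section

variable {b : B}

lemma continuousOn_ite_pos_one_zero_spectrum (hb : IsUnit b) :
    ContinuousOn (fun t : ℝ => if 0 < t then (1 : ℝ) else 0) (spectrum ℝ b) :=
  continuousOn_ite_pos_one_zero.mono fun _ ht h0 => spectrum.zero_notMem ℝ hb (h0 ▸ ht)

lemma isStarProjection_posProjection (hb : IsUnit b) : IsStarProjection (posProjection b) where
  isSelfAdjoint := cfc_predicate _ b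
  isIdempotentElem := by
    have hf := continuousOn_ite_pos_one_zero_spectrum hb
    rw [IsIdempotentElem, posProjection, ← cfc_mul _ _ b hf hf]
    exact cfc_congr fun t _ => by split_ifs <;> simp

lemma posProjection_mul_self (hb : IsUnit b) (hsa : IsSelfAdjoint b) :
    posProjection b * b = b⁺ := by
  nth_rw 2 [← cfc_id' ℝ b]
  rw [posProjection, ← cfc_mul _ _ b (continuousOn_ite_pos_one_zero_spectrum hb),
    CFC.posPart_def, cfcₙ_eq_cfc]
  refine cfc_congr fun t _ => ?_
  split_ifs with ht
  · simp [ht.le]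
  · simp [not_lt.mp ht]

lemma one_sub_posProjection_mul_self (hb : IsUnit b) (hsa : IsSelfAdjoint b) :
    (1 - posProjection b) * b = -b⁻ := by
  rw [sub_mul, one_mul, posProjection_mul_self hb hsa]
  nth_rw 1 [← CFC.posPart_sub_negPart b]
  abel

end

lemma exists_isStarProjection_norm_mul_posPart_le {a : B} (ha : IsSelfAdjoint a)
    (happrox : ∀ δ : ℝ, 0 < δ → ∃ b : B, IsSelfAdjoint b ∧ IsUnit b ∧ ‖a - b‖ ≤ δ)
    {ε : ℝ} (hε : 0 < ε) :
    ∃ p : B, IsStarProjection p ∧ ‖(1 - p) * a⁺‖ ≤ ε ∧ ‖p * a⁻‖ ≤ ε := by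
  have hε2 : 0 < ε ^ 2 := pow_pos hε 2
  have hsmall_neg : ∀ᶠ b in 𝓝[{b | IsSelfAdjoint b}] a, (‖b⁻ - a⁻‖ + ‖a - b‖) * ‖a⁺‖ < ε ^ 2 := by
    have := continuousOn_negPart a ha
    have hcont : ContinuousWithinAt (fun b : B => (‖b⁻ - a⁻‖ + ‖a - b‖) * ‖a⁺‖)
      {b | IsSelfAdjoint b} a := by fun_prop
    exact hcont.tendsto.eventually_lt_const (by simpa using hε2)
  have hsmall_pos : ∀ᶠ b in 𝓝[{b | IsSelfAdjoint b}] a, (‖b⁺ - a⁺‖ + ‖a - b‖) * ‖a⁻‖ < ε ^ 2 := by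
    have := continuousOn_posPart a ha
    have hcont : ContinuousWithinAt (fun b : B => (‖b⁺ - a⁺‖ + ‖a - b‖) * ‖a⁻‖)
      {b | IsSelfAdjoint b} a := by fun_prop
    exact hcont.tendsto.eventually_lt_const (by simpa using hε2)
  obtain ⟨δ, hδ, hball⟩ := Metric.mem_nhdsWithin_iff.mp (hsmall_neg.and hsmall_pos)
  obtain ⟨b, hbsa, hbu, hab⟩ := happrox (δ / 2) (half_pos hδ)
  have hbF := hball ⟨by rw [Metric.mem_ball, dist_comm, dist_eq_norm]; linarith, hbsa⟩
  have hp := isStarProjection_posProjection hbu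
  refine ⟨posProjection b, hp, ?_, ?_⟩
  · refine (sq_le_sq₀ (norm_nonneg _) hε.le).mp ?_
    exact (hp.one_sub.norm_mul_posPart_sq_le ha (one_sub_posProjection_mul_self hbu hbsa)).trans
      hbF.1.le
  · refine (sq_le_sq₀ (norm_nonneg _) hε.le).mp ?_
    have := hp.norm_mul_posPart_sq_le ha.neg
      (by rw [mul_neg, posProjection_mul_self hbu hbsa, CFC.negPart_neg])
    rw [CFC.posPart_neg, CFC.negPart_neg, CFC.negPart_neg, neg_sub_neg, norm_sub_rev b] at this
    exact this.trans hbF.2.le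

end

theorem stmt2_general {B : Type*} [CStarAlgebra B] [PartialOrder B] [StarOrderedRing B]
    (A : StarSubalgebra ℂ B)
    (h : ∀ a ∈ A, IsSelfAdjoint a → ∀ ε : ℝ, 0 < ε →
      ∃ b : B, IsSelfAdjoint b ∧ IsUnit b ∧ ‖a - b‖ ≤ ε) :
    ∀ x ∈ A, ∀ y ∈ A, 0 ≤ x → 0 ≤ y → x * y = 0 → ∀ ε : ℝ, 0 < ε →
      ∃ p : B, IsProjection p ∧ ‖p * x - x‖ ≤ ε ∧ ‖(1 - p) * y - y‖ ≤ ε := by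
  intro x hxA y hyA hx hy hxy ε hε
  have hsa : IsSelfAdjoint (x - y) := hx.isSelfAdjoint.sub hy.isSelfAdjoint
  obtain ⟨hpos, hneg⟩ := CFC.posPart_negPart_unique rfl hxy
  obtain ⟨p, hp, hpx, hpy⟩ := exists_isStarProjection_norm_mul_posPart_le hsa
    (h _ (sub_mem hxA hyA) hsa) hε
  rw [hpos] at hpx
  rw [hneg] at hpy
  refine ⟨p, ⟨hp.isSelfAdjoint.star_eq, hp.isIdempotentElem.eq⟩, ?_, ?_⟩
  · rwa [← norm_neg, neg_sub, ← one_sub_mul]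
  · rwa [sub_mul, one_mul, sub_sub_cancel_left, norm_neg]

theorem stmt2 {B : Type*} [CStarAlgebra B] [PartialOrder B] [StarOrderedRing B]
    (A : StarSubalgebra ℂ B) (hA : IsClosed (A : Set B))
    (h : ∀ a ∈ A, IsSelfAdjoint a → ∀ ε : ℝ, 0 < ε →
      ∃ b : B, IsSelfAdjoint b ∧ IsUnit b ∧ ‖a - b‖ ≤ ε) :
    ∀ x ∈ A, ∀ y ∈ A, 0 ≤ x → 0 ≤ y → x * y = 0 → ∀ ε : ℝ, 0 < ε →
      ∃ p : B, IsProjection p ∧ ‖p * x - x‖ ≤ ε ∧ ‖(1 - p) * y - y‖ ≤ ε :=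
  stmt2_general A h
end

section
/- Let A ⊆ B be an inclusion of unital C*-algebras with A a closed *-subalgebra of B containing the unit 1_B. Suppose that for all positive x, y ∈ A with x·y = 0 and every ε > 0 there exists a projection p ∈ B such that ‖p·x − x‖ ≤ ε and ‖(1−p)·y − y‖ ≤ ε. Then for every self-adjoint a ∈ A and every ε > 0 there exists an invertible self-adjoint b ∈ B with ‖a − b‖ ≤ ε. -/
theorem IsProjection.isStarProjection {R : Type*} [Mul R] [Star R] {p : R}
    (hp : IsProjection p) : IsStarProjection p :=
  isStarProjection_iff'.2 ⟨hp.2, hp.1⟩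

namespace StarSubalgebra

variable {B : Type*} [CStarAlgebra B] {A : StarSubalgebra ℂ B}

theorem posPart_mem (hA : IsClosed (A : Set B)) {a : B} (ha : a ∈ A) : a⁺ ∈ A :=
  cfcₙ_mem (hs := hA) _ ha

theorem negPart_mem (hA : IsClosed (A : Set B)) {a : B} (ha : a ∈ A) : a⁻ ∈ A :=
  cfcₙ_mem (hs := hA) _ ha

end StarSubalgebra

theorem CStarRing.norm_le_one_of_mem_unitary {E : Type*} [NormedRing E] [StarRing E]
    [CStarRing E] {U : E} (hU : U ∈ unitary E) : ‖U‖ ≤ 1 := by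
  nontriviality E
  exact (CStarRing.norm_of_mem_unitary hU).le

namespace IsStarProjection

theorem sub_one_sub_mem_unitary {R : Type*} [Ring R] [StarRing R] {p : R}
    (hp : IsStarProjection p) : p - (1 - p) ∈ unitary R := by
  convert hp.two_mul_sub_one_mem_unitary using 1
  noncomm_ring

theorem norm_sub_mul_mul_self_le {E : Type*} [NonUnitalNormedRing E] [StarRing E] [CStarRing E]
    {p x : E} (hp : IsStarProjection p) (hx : IsSelfAdjoint x) :
    ‖x - p * x * p‖ ≤ 2 * ‖p * x - x‖ := by
  have hxp : ‖x * p - x‖ = ‖p * x - x‖ := by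
    rw [← norm_star (p * x - x), star_sub, star_mul, hp.isSelfAdjoint.star_eq, hx.star_eq]
  calc ‖x - p * x * p‖ = ‖(p * x - x) + p * (x * p - x)‖ := by
        rw [← norm_neg]; congr 1; noncomm_ring
    _ ≤ ‖p * x - x‖ + ‖p‖ * ‖x * p - x‖ :=
        (norm_add_le _ _).trans (by gcongr; exact norm_mul_le _ _)
    _ ≤ ‖p * x - x‖ + 1 * ‖x * p - x‖ := by gcongr; exact hp.norm_le p
    _ = 2 * ‖p * x - x‖ := by rw [hxp]; ring

theorem exists_isSelfAdjoint_isUnit_norm_sub_le {B : Type*} [CStarAlgebra B] [PartialOrder B]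
    [StarOrderedRing B] {p x y : B} (hp : IsStarProjection p) (hx : 0 ≤ x) (hy : 0 ≤ y)
    {t : ℝ} (ht : 0 < t) :
    ∃ b : B, IsSelfAdjoint b ∧ IsUnit b ∧
      ‖(x - y) - b‖ ≤ 2 * ‖p * x - x‖ + 2 * ‖(1 - p) * y - y‖ + t := by
  set q := 1 - p with hq_def
  have hq : IsStarProjection q := hp.one_sub
  set s := p - q
  have hs : s ∈ unitary B := hp.sub_one_sub_mem_unitary
  have hpxp : 0 ≤ p * x * p := hp.isSelfAdjoint.conjugate_nonneg hx
  have hqyq : 0 ≤ q * y * q := hq.isSelfAdjoint.conjugate_nonneg hy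
  have hpq : p * q = 0 := hp.mul_one_sub_self
  have hqp : q * p = 0 := hp.one_sub_mul_self
  have hpp : p * p = p := hp.isIdempotentElem.eq
  have hqq : q * q = q := hq.isIdempotentElem.eq
  have hb : p * x * p - q * y * q + t • s =
      (algebraMap ℝ B t + (p * x * p + q * y * q)) * s := by
    rw [Algebra.algebraMap_eq_smul_one, ← add_sub_cancel p (1 : B), ← hq_def]
    simp only [s, add_mul, mul_sub, smul_mul_assoc, mul_assoc, hpp, hqq, hpq, hqp, mul_zero,
      add_zero, zero_add, smul_sub]
    abel
  refine ⟨p * x * p - q * y * q + t • s, ?_, ?_, ?_⟩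
  · exact (hpxp.isSelfAdjoint.sub hqyq.isSelfAdjoint).add
      (IsSelfAdjoint.smul (.all t) (hp.isSelfAdjoint.sub hq.isSelfAdjoint))
  · rw [hb]
    exact ((isStrictlyPositive_algebraMap ht).add_nonneg (add_nonneg hpxp hqyq)).isUnit.mul
      (Unitary.isUnit_coe (U := ⟨s, hs⟩))
  · calc ‖(x - y) - (p * x * p - q * y * q + t • s)‖
          = ‖(x - p * x * p) - (y - q * y * q) - t • s‖ := by congr 1; abel
      _ ≤ ‖x - p * x * p‖ + ‖y - q * y * q‖ + t * ‖s‖ := by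
          grw [norm_sub_le, norm_sub_le, norm_smul, Real.norm_of_nonneg ht.le]
      _ ≤ 2 * ‖p * x - x‖ + 2 * ‖q * y - y‖ + t * 1 := by
          grw [hp.norm_sub_mul_mul_self_le hx.isSelfAdjoint,
            hq.norm_sub_mul_mul_self_le hy.isSelfAdjoint, CStarRing.norm_le_one_of_mem_unitary hs]
      _ = _ := by rw [mul_one]

end IsStarProjection

theorem stmt3 {B : Type*} [CStarAlgebra B] [PartialOrder B] [StarOrderedRing B]
    (A : StarSubalgebra ℂ B) (hA : IsClosed (A : Set B))
    (h : ∀ x ∈ A, ∀ y ∈ A, 0 ≤ x → 0 ≤ y → x * y = 0 → ∀ ε : ℝ, 0 < ε →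
      ∃ p : B, IsProjection p ∧ ‖p * x - x‖ ≤ ε ∧ ‖(1 - p) * y - y‖ ≤ ε) :
    ∀ a ∈ A, IsSelfAdjoint a → ∀ ε : ℝ, 0 < ε →
      ∃ b : B, IsSelfAdjoint b ∧ IsUnit b ∧ ‖a - b‖ ≤ ε := by
  intro a ha hsa ε hε
  obtain ⟨p, hp, hpx, hpy⟩ := h a⁺ (A.posPart_mem hA ha) a⁻ (A.negPart_mem hA ha)
    (CFC.posPart_nonneg a) (CFC.negPart_nonneg a) (CFC.posPart_mul_negPart a) (ε / 5)
    (by positivity)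
  obtain ⟨b, hb, hbu, hab⟩ := hp.isStarProjection.exists_isSelfAdjoint_isUnit_norm_sub_le
    (CFC.posPart_nonneg a) (CFC.negPart_nonneg a) (by positivity : 0 < ε / 5)
  refine ⟨b, hb, hbu, ?_⟩
  rw [CFC.posPart_sub_negPart a hsa] at hab
  linarith
end
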